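/- For every ε > 0 there exists a finite simple locally bipartite graph G with δ(G) ≥ (5/9 − ε)·|G| such that G admits no graph homomorphism to C̄₇ (such graphs are obtained as suitable blow-ups of H₂⁺). Consequently the bound 5/9 in the statement 'every locally bipartite graph with δ(G) > (5/9)·|G| is homomorphic to C̄₇' cannot be replaced by any smaller constant. -/

import Mathlib

/-!
`H₂⁺` is locally bipartite and admits no homomorphism to `C̄₇`; both properties pass to any
blow-up of `H₂⁺` that keeps every vertex, since the blow-up maps onto `H₂⁺` and contains a
copy of it. Weighting `u, v₀, …, v₆` by `1, 2, 0, 2, 1, 1, 2, 0` (total `9`), every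
neighbourhood has weight at least `5`. Replacing each vertex `w` by an independent set of size
`m·weight(w) + 1` thus gives a graph on `9m + 8` vertices of minimum degree at least `5m`.
-/

open SimpleGraph

/-- A finite simple graph is *locally bipartite* if each neighbourhood induces a
bipartite (equivalently, 2-colourable) graph. -/
def LocallyBipartite {V : Type*} (G : SimpleGraph V) : Prop :=
  ∀ v : V, (G.induce (G.neighborSet v)).Colorable 2

/-- `C̄₇`, the complement of the 7-cycle: `i` and `j` are adjacent iff they differ by
`±2` or `±3` modulo 7. -/
def C7bar : SimpleGraph (ZMod 7) :=
  SimpleGraph.fromRel (fun i j => j = i + 2 ∨ j = i + 3)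

/-- `H₀`, the Moser spindle: the 7-cycle `v₀v₁…v₆` together with the edges
`v₀v₂`, `v₀v₅`, `v₁v₃`, `v₄v₆`. -/
def H0 : SimpleGraph (ZMod 7) :=
  SimpleGraph.fromRel (fun i j =>
    j = i + 1 ∨ (i = 0 ∧ j = 2) ∨ (i = 0 ∧ j = 5) ∨ (i = 1 ∧ j = 3) ∨ (i = 4 ∧ j = 6))

/-- `H₁`: the 7-cycle `v₀v₁…v₆` together with the edges
`v₃v₅`, `v₅v₀`, `v₀v₂`, `v₂v₄`, `v₆v₁`. -/
def H1 : SimpleGraph (ZMod 7) :=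
  SimpleGraph.fromRel (fun i j =>
    j = i + 1 ∨ (i = 3 ∧ j = 5) ∨ (i = 5 ∧ j = 0) ∨ (i = 0 ∧ j = 2) ∨
      (i = 2 ∧ j = 4) ∨ (i = 6 ∧ j = 1))

/-- `H₂`: the 7-cycle `v₀v₁…v₆` together with the edges
`v₁v₃`, `v₃v₅`, `v₅v₀`, `v₀v₂`, `v₂v₄`, `v₄v₆`. -/
def H2 : SimpleGraph (ZMod 7) :=
  SimpleGraph.fromRel (fun i j =>
    j = i + 1 ∨ (i = 1 ∧ j = 3) ∨ (i = 3 ∧ j = 5) ∨ (i = 5 ∧ j = 0) ∨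
      (i = 0 ∧ j = 2) ∨ (i = 2 ∧ j = 4) ∨ (i = 4 ∧ j = 6))

/-- `H₂⁺`: the graph `H₂` (on the `some` vertices) together with an extra vertex
(`none`) joined to exactly `v₀`, `v₂` and `v₅`. -/
def H2plus : SimpleGraph (Option (ZMod 7)) :=
  SimpleGraph.fromRel (fun a b =>
    match a, b with
    | some i, some j =>
        j = i + 1 ∨ (i = 1 ∧ j = 3) ∨ (i = 3 ∧ j = 5) ∨ (i = 5 ∧ j = 0) ∨
          (i = 0 ∧ j = 2) ∨ (i = 2 ∧ j = 4) ∨ (i = 4 ∧ j = 6)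
    | none, some j => j = 0 ∨ j = 2 ∨ j = 5
    | _, _ => False)

/-- A graph `G` contains a copy of `H` if there is an injective graph homomorphism
from `H` to `G`, i.e. `G` has a (not necessarily induced) subgraph isomorphic to `H`. -/
def ContainsCopy {W V : Type*} (H : SimpleGraph W) (G : SimpleGraph V) : Prop :=
  ∃ f : H →g G, Function.Injective f

/-- A pair of vertices `u, v` is *dense* if the common neighbourhood of `u` and `v`
contains an edge. -/
def DensePair {V : Type*} (G : SimpleGraph V) (u v : V) : Prop :=
  ∃ x y : V, G.Adj u x ∧ G.Adj v x ∧ G.Adj u y ∧ G.Adj v y ∧ G.Adj x y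

/-- A pair of distinct vertices `u, v` is *sparse* if `u` and `v` are not adjacent and
the common neighbourhood of `u` and `v` contains no edge. -/
def SparsePair {V : Type*} (G : SimpleGraph V) (u v : V) : Prop :=
  u ≠ v ∧ ¬ G.Adj u v ∧ ¬ DensePair G u v

/-- A set of vertices is independent if it contains no edge. -/
def IsIndepSet {V : Type*} (G : SimpleGraph V) (s : Set V) : Prop :=
  ∀ ⦃u⦄, u ∈ s → ∀ ⦃v⦄, v ∈ s → ¬ G.Adj u v

namespace SimpleGraph

variable {V W : Type*}

noncomputable def homComapOfSurjective (H : SimpleGraph W) {π : V → W}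
    (hπ : Function.Surjective π) : H →g H.comap π where
  toFun := Function.surjInv hπ
  map_rel' := by simp [Function.surjInv_eq hπ]

end SimpleGraph

theorem LocallyBipartite.comap {V W : Type*} {H : SimpleGraph W} (hH : LocallyBipartite H)
    (π : V → W) : LocallyBipartite (H.comap π) :=
  fun x => (hH (π x)).of_hom ⟨fun y => ⟨π y, y.2⟩, id⟩

theorem locallyBipartite_of_exists_bipartition {V : Type*} (G : SimpleGraph V)
    (h : ∀ v, ∃ s : Set V,
      ∀ a b, G.Adj v a → G.Adj v b → G.Adj a b → (a ∈ s ↔ b ∉ s)) :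
    LocallyBipartite G := by
  classical
  intro v
  obtain ⟨s, hs⟩ := h v
  refine ⟨Coloring.mk (fun y => if y.1 ∈ s then 0 else 1) fun {a b} hab => ?_⟩
  have := hs a b a.2 b.2 hab
  split_ifs <;> simp_all

section Blowup

variable {W : Type*} [Fintype W] (k : W → ℕ)

noncomputable def blowupEquiv : (Σ w, Fin (k w)) ≃ Fin (∑ w, k w) :=
  Fintype.equivFinOfCardEq (by simp)

noncomputable def blowupProj (i : Fin (∑ w, k w)) : W :=
  ((blowupEquiv k).symm i).1

theorem blowupProj_surjective (hk : ∀ w, 0 < k w) : Function.Surjective (blowupProj k) :=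
  fun w => ⟨blowupEquiv k ⟨w, ⟨0, hk w⟩⟩, by simp [blowupProj]⟩

theorem ncard_preimage_blowupProj (s : Finset W) :
    (blowupProj k ⁻¹' s).ncard = ∑ w ∈ s, k w := by
  have : blowupProj k ⁻¹' s =
      (blowupEquiv k).symm ⁻¹' ↑(s.sigma fun w => (Finset.univ : Finset (Fin (k w)))) := by
    ext; simp [blowupProj]
  rw [this, Set.ncard_preimage_of_injective_subset_range (blowupEquiv k).symm.injective
    (by simp), Set.ncard_coe_finset, Finset.card_sigma]
  simp

end Blowup

instance : DecidableRel C7bar.Adj := inferInstanceAs (DecidableRel (fromRel _).Adj)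

instance : DecidableRel H2plus.Adj := fun a b => by
  rcases a with _ | i <;> rcases b with _ | j <;> dsimp only [H2plus, fromRel] <;> infer_instance

theorem exists_bipartition_neighborSet_H2plus : ∀ v, ∃ s : Finset (Option (ZMod 7)),
    ∀ a b, H2plus.Adj v a → H2plus.Adj v b → H2plus.Adj a b → (a ∈ s ↔ b ∉ s) := by
  decide

theorem locallyBipartite_H2plus : LocallyBipartite H2plus :=
  locallyBipartite_of_exists_bipartition _ fun v =>
    let ⟨s, hs⟩ := exists_bipartition_neighborSet_H2plus v
    ⟨s, by simpa using hs⟩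

-- Each vertex is introduced together with its edges to the earlier ones, so `decide` prunes early.
set_option synthInstance.maxSize 5000 in
theorem false_of_C7bar_adj_H2plus_edges :
    ∀ a₀ a₁, C7bar.Adj a₀ a₁ → ∀ a₂, C7bar.Adj a₀ a₂ → C7bar.Adj a₁ a₂ →
    ∀ a₃, C7bar.Adj a₁ a₃ → C7bar.Adj a₂ a₃ → ∀ a₄, C7bar.Adj a₂ a₄ → C7bar.Adj a₃ a₄ →
    ∀ a₅, C7bar.Adj a₃ a₅ → C7bar.Adj a₄ a₅ → C7bar.Adj a₀ a₅ →
    ∀ a₆, C7bar.Adj a₄ a₆ → C7bar.Adj a₅ a₆ → C7bar.Adj a₀ a₆ →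
    ∀ u, C7bar.Adj u a₀ → C7bar.Adj u a₂ → ¬ C7bar.Adj u a₅ := by
  decide

theorem isEmpty_hom_H2plus_C7bar : IsEmpty (H2plus →g C7bar) :=
  ⟨fun f => false_of_C7bar_adj_H2plus_edges
    (f (some 0)) (f (some 1)) (f.map_adj (by decide))
    (f (some 2)) (f.map_adj (by decide)) (f.map_adj (by decide))
    (f (some 3)) (f.map_adj (by decide)) (f.map_adj (by decide))
    (f (some 4)) (f.map_adj (by decide)) (f.map_adj (by decide))
    (f (some 5)) (f.map_adj (by decide)) (f.map_adj (by decide)) (f.map_adj (by decide))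
    (f (some 6)) (f.map_adj (by decide)) (f.map_adj (by decide)) (f.map_adj (by decide))
    (f none) (f.map_adj (by decide)) (f.map_adj (by decide)) (f.map_adj (by decide))⟩

def h2plusWeight : Option (ZMod 7) → ℕ
  | none => 1
  | some 0 => 2
  | some 1 => 0
  | some 2 => 2
  | some 3 => 1
  | some 4 => 1
  | some 5 => 2
  | some 6 => 0

theorem sum_h2plusWeight : ∑ w, h2plusWeight w = 9 := by
  decide

theorem five_le_sum_h2plusWeight_neighborFinset (v : Option (ZMod 7)) :
    5 ≤ ∑ w ∈ H2plus.neighborFinset v, h2plusWeight w := by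
  revert v; decide

noncomputable def h2plusBlowup (m : ℕ) :
    SimpleGraph (Fin (∑ w, (m * h2plusWeight w + 1))) :=
  H2plus.comap (blowupProj fun w => m * h2plusWeight w + 1)

theorem sum_h2plusBlowup_weight (m : ℕ) : ∑ w, (m * h2plusWeight w + 1) = 9 * m + 8 := by
  rw [Finset.sum_add_distrib, ← Finset.mul_sum, sum_h2plusWeight]
  simp [mul_comm]

theorem five_mul_le_ncard_neighborSet_h2plusBlowup (m : ℕ) (x) :
    5 * m ≤ ((h2plusBlowup m).neighborSet x).ncard := by
  rw [h2plusBlowup, neighborSet_comap, ← coe_neighborFinset, ncard_preimage_blowupProj]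
  calc 5 * m ≤ m * ∑ w ∈ H2plus.neighborFinset (blowupProj _ x), h2plusWeight w := by
        rw [mul_comm]; exact Nat.mul_le_mul_left m (five_le_sum_h2plusWeight_neighborFinset _)
    _ ≤ _ := by rw [Finset.mul_sum]; exact Finset.sum_le_sum fun w _ => Nat.le_succ _

/-- For every `ε > 0` there is a locally bipartite graph `G` with minimum degree at least
`(5/9 − ε)·|G|` (every vertex has degree at least `(5/9 − ε)·|G|`) admitting no
homomorphism to `C̄₇`; hence the constant `5/9` is optimal. -/
theorem exists_locallyBipartite_no_hom_to_C7bar (eps : ℝ) (heps : 0 < eps) :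
    ∃ (n : ℕ) (G : SimpleGraph (Fin n)),
      LocallyBipartite G ∧
      (∀ v : Fin n, (5 / 9 - eps) * (n : ℝ) ≤ ((G.neighborSet v).ncard : ℝ)) ∧
      ¬ Nonempty (G →g C7bar) := by
  obtain ⟨m, hm⟩ := exists_nat_gt (1 / eps)
  have hepsm : 1 < eps * m := by rwa [div_lt_iff₀ heps, mul_comm] at hm
  refine ⟨_, h2plusBlowup m, locallyBipartite_H2plus.comap _, fun x => ?_, fun ⟨f⟩ =>
    isEmpty_hom_H2plus_C7bar.false
      (f.comp (H2plus.homComapOfSurjective (blowupProj_surjective _ fun _ => Nat.succ_pos _)))⟩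
  have hn : ((∑ w, (m * h2plusWeight w + 1) : ℕ) : ℝ) = 9 * m + 8 := by
    exact_mod_cast sum_h2plusBlowup_weight m
  rw [hn]
  calc (5 / 9 - eps) * (9 * m + 8) ≤ 5 * m := by nlinarith
    _ ≤ _ := by exact_mod_cast five_mul_le_ncard_neighborSet_h2plusBlowup m x
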